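/- For every finite simple graph G, the fifth power sum of the complex roots of the Laplacian matching polynomial satisfies p_5(G) = A_5(G) + 5·A_4(G) + 5·A_3(G) − 5·A_2(G) + 5·C(G) + 10·B(G). -/

import Mathlib

/-!
Expanding every product in `LM_G` by Vieta's formulas gives, for every `k`,
`e_k(roots) = Σ_{M, 2|M| ≤ k} (-1)^|M| e_{k-2|M|}(d_v : v ∉ V(M))`,
so `e_1, …, e_5` of the roots only see matchings with at most two edges. Deleting the ends of an
edge `xy` from the degree multiset shifts its elementary symmetric functions by the complete
homogeneous polynomials `h_j(d_x, d_y)`, whose sums over the edges are `A_{j+1}` plus `B` or `C`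
by double counting; a 2-matching through an edge `xy` consists of it and one of the
`|E| + 1 - d_x - d_y` edges disjoint from it. Newton's identity for `p_5`, applied to the roots and
to the degree multiset (whose fifth power sum is `A_5`), turns this into the formula: the terms in
`|E|` and in the number of 2-matchings cancel.
-/

open Polynomial Finset

namespace LMRIV

open scoped Classical

variable {V : Type*}

/-- The degree of a vertex. -/
noncomputable def deg [Fintype V] (G : SimpleGraph V) (v : V) : ℕ :=
  (univ.filter fun w => G.Adj v w).card

/-- The finset of edges of `G`. -/
noncomputable def edges [Fintype V] (G : SimpleGraph V) : Finset (Sym2 V) :=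
  univ.filter fun e => e ∈ G.edgeSet

/-- A matching: a set of pairwise disjoint edges. -/
def IsMatching (G : SimpleGraph V) (M : Finset (Sym2 V)) : Prop :=
  (↑M : Set (Sym2 V)) ⊆ G.edgeSet ∧
    ∀ e ∈ M, ∀ f ∈ M, e ≠ f → ∀ x : V, x ∈ e → x ∉ f

/-- The finset of all matchings of `G` (including the empty matching). -/
noncomputable def matchings [Fintype V] (G : SimpleGraph V) : Finset (Finset (Sym2 V)) :=
  univ.filter fun M => IsMatching G M

/-- The set of vertices covered by a matching. -/
noncomputable def covered [Fintype V] (M : Finset (Sym2 V)) : Finset V :=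
  univ.filter fun x => ∃ e ∈ M, x ∈ e

/-- The Laplacian matching polynomial of `G`, with coefficients in `R`. -/
noncomputable def LM (R : Type*) [CommRing R] [Fintype V] (G : SimpleGraph V) :
    Polynomial R :=
  ∑ M ∈ matchings G, (-1 : Polynomial R) ^ M.card *
    ∏ v ∈ univ \ covered M, (X - C (deg G v : R))

/-- `p_r(G)`: the sum of the `r`-th powers of the complex roots of `LM_G`. -/
noncomputable def psum [Fintype V] (G : SimpleGraph V) (r : ℕ) : ℂ :=
  (((LM ℂ G).roots).map (· ^ r)).sum

/-- `A_r(G) = Σ_v d_G(v)^r`. -/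
noncomputable def A [Fintype V] (G : SimpleGraph V) (r : ℕ) : ℕ :=
  ∑ v : V, (deg G v) ^ r

/-- `B(G) = Σ_{xy ∈ E(G)} d_G(x) d_G(y)`. -/
noncomputable def B [Fintype V] (G : SimpleGraph V) : ℕ :=
  ∑ e ∈ edges G, Sym2.lift ⟨fun x y => deg G x * deg G y, fun x y => mul_comm _ _⟩ e

/-- `C(G) = Σ_{xy ∈ E(G)} (d_G(x)^2 d_G(y) + d_G(x) d_G(y)^2)`. -/
noncomputable def Csum [Fintype V] (G : SimpleGraph V) : ℕ :=
  ∑ e ∈ edges G,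
    Sym2.lift ⟨fun x y => deg G x ^ 2 * deg G y + deg G x * deg G y ^ 2,
      fun x y => by ring⟩ e

/-- The graph obtained from `G` by adding the edge `uv`. -/
def addEdge (G : SimpleGraph V) (u v : V) : SimpleGraph V :=
  G ⊔ SimpleGraph.fromEdgeSet {s(u, v)}

/-- `S_w = Σ_{x ∈ N_G(w)} d_G(x)`. -/
noncomputable def Ssum [Fintype V] (G : SimpleGraph V) (w : V) : ℕ :=
  ∑ x ∈ univ.filter fun x => G.Adj w x, deg G x

/-- `T_w = Σ_{x ∈ N_G(w)} d_G(x)^2`. -/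
noncomputable def Tsum [Fintype V] (G : SimpleGraph V) (w : V) : ℕ :=
  ∑ x ∈ univ.filter fun x => G.Adj w x, (deg G x) ^ 2

/-- The `r`-th elementary symmetric polynomial of the degree sequence of `G`. -/
noncomputable def esymmDeg [Fintype V] (G : SimpleGraph V) (r : ℕ) : ℕ :=
  ∑ s ∈ univ.powersetCard r, ∏ v ∈ s, deg G v

/-- `φ_2(G)`: the number of 2-matchings of `G`. -/
noncomputable def phi2 [Fintype V] (G : SimpleGraph V) : ℕ :=
  ((matchings G).filter fun M => M.card = 2).card

end LMRIV

namespace Multiset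

variable {R : Type*} [CommRing R]

theorem esymm_zero (s : Multiset R) : s.esymm 0 = 1 := by
  simp [esymm]

theorem esymm_one (s : Multiset R) : s.esymm 1 = s.sum := by
  simp [esymm, powersetCard_one, map_map]

theorem esymm_eq_zero_of_card_lt {s : Multiset R} {k : ℕ} (h : card s < k) : s.esymm k = 0 := by
  simp [esymm, powersetCard_eq_empty _ h]

theorem esymm_cons (a : R) (s : Multiset R) (k : ℕ) :
    (a ::ₘ s).esymm (k + 1) = a * s.esymm k + s.esymm (k + 1) := by
  simp only [esymm, powersetCard_cons, map_add, sum_add, map_map, Function.comp_def, prod_cons]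
  rw [add_comm, sum_map_mul_left]

theorem esymm_cons_cons (a b : R) (s : Multiset R) (k : ℕ) :
    (a ::ₘ b ::ₘ s).esymm (k + 2) =
      s.esymm (k + 2) + (a + b) * s.esymm (k + 1) + a * b * s.esymm k := by
  rw [esymm_cons, esymm_cons, esymm_cons]
  ring

-- `e_k(s) = Σ_j (-1)^j h_j(a, b) e_{k-j}(a :: b :: s)`, with `h_j` complete homogeneous.

theorem esymm_one_eq_of_cons_cons (a b : R) (s : Multiset R) :
    s.esymm 1 = (a ::ₘ b ::ₘ s).esymm 1 - (a + b) := by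
  rw [esymm_cons, esymm_cons, esymm_zero, esymm_zero]
  ring

theorem esymm_two_eq_of_cons_cons (a b : R) (s : Multiset R) :
    s.esymm 2 = (a ::ₘ b ::ₘ s).esymm 2 - (a + b) * (a ::ₘ b ::ₘ s).esymm 1
      + ((a + b) ^ 2 - a * b) := by
  rw [esymm_cons_cons a b s 0, esymm_cons, esymm_cons, esymm_zero, esymm_zero]
  ring

theorem esymm_three_eq_of_cons_cons (a b : R) (s : Multiset R) :
    s.esymm 3 = (a ::ₘ b ::ₘ s).esymm 3 - (a + b) * (a ::ₘ b ::ₘ s).esymm 2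
      + ((a + b) ^ 2 - a * b) * (a ::ₘ b ::ₘ s).esymm 1
      - ((a + b) ^ 3 - 2 * (a + b) * (a * b)) := by
  rw [esymm_cons_cons a b s 1, esymm_cons_cons a b s 0]
  rw [esymm_cons, esymm_cons, esymm_zero, esymm_zero]
  ring

theorem sum_map_pow_five (s : Multiset R) :
    (s.map (· ^ 5)).sum =
      s.esymm 1 ^ 5 - 5 * s.esymm 1 ^ 3 * s.esymm 2 + 5 * s.esymm 1 * s.esymm 2 ^ 2
        + 5 * s.esymm 1 ^ 2 * s.esymm 3 - 5 * s.esymm 2 * s.esymm 3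
        - 5 * s.esymm 1 * s.esymm 4 + 5 * s.esymm 5 := by
  induction s using Multiset.induction with
  | empty => simp [esymm, powersetCard_zero_right]
  | cons a s ih =>
    simp only [map_cons, sum_cons, ih, esymm_cons a s, esymm_zero]
    ring

open Polynomial in
theorem coeff_prod_X_sub_C_sub (s : Multiset R) {j k n : ℕ} (hs : card s + j = n)
    (hk : k ≤ n) :
    (s.map fun a => X - C a).prod.coeff (n - k) =
      if j ≤ k then (-1) ^ (k - j) * s.esymm (k - j) else 0 := by
  nontriviality R
  split_ifs with hjk
  · rw [prod_X_sub_C_coeff s (by omega), show card s - (n - k) = k - j by omega]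
  · exact coeff_eq_zero_of_natDegree_lt (by rw [natDegree_multiset_prod_X_sub_C_eq_card]; omega)

end Multiset

theorem Finset.sum_filter_two_mul_card_le {α M : Type*} [AddCommMonoid M]
    (S : Finset (Finset α)) (f : Finset α → M) (k : ℕ) :
    ∑ s ∈ S with 2 * #s ≤ k, f s =
      ∑ j ∈ range (k / 2 + 1), ∑ s ∈ S with #s = j, f s := by
  rw [← sum_fiberwise_of_maps_to (g := card) (t := range (k / 2 + 1))
    fun s hs => by simp only [mem_filter, mem_range] at hs ⊢; omega]
  refine sum_congr rfl fun j hj => ?_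
  rw [mem_range] at hj
  rw [filter_filter]
  exact sum_congr (filter_congr fun s _ => by omega) fun _ _ => rfl

namespace LMRIV

open scoped Classical

variable {V : Type*}

section

variable [Fintype V] {G : SimpleGraph V} {R : Type*} [CommRing R]

section Matchings

theorem mem_edges {e : Sym2 V} : e ∈ edges G ↔ e ∈ G.edgeSet := by
  simp [edges]

theorem mem_matchings {M : Finset (Sym2 V)} : M ∈ matchings G ↔ IsMatching G M := by
  simp [matchings]

theorem IsMatching.mem_edges {M : Finset (Sym2 V)} (hM : IsMatching G M) {e : Sym2 V}
    (he : e ∈ M) : e ∈ edges G :=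
  LMRIV.mem_edges.2 (hM.1 he)

theorem filter_mem_mk (x y : V) : ({v | v ∈ s(x, y)} : Finset V) = {x, y} := by
  ext; simp

theorem covered_singleton_mk (x y : V) : covered {s(x, y)} = {x, y} := by
  ext; simp [covered]

theorem sum_filter_mem_edge (g : V → R) {e : Sym2 V} (he : e ∈ G.edgeSet) :
    ∑ v ∈ univ with v ∈ e, g v =
      Sym2.lift ⟨fun x y => g x + g y, fun _ _ => add_comm _ _⟩ e := by
  induction e using Sym2.ind with
  | _ x y => rw [filter_mem_mk, sum_pair (G.ne_of_adj he), Sym2.lift_mk]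

theorem covered_eq_biUnion (M : Finset (Sym2 V)) :
    covered M = M.biUnion fun e => {v | v ∈ e} := by
  ext; simp [covered]

theorem IsMatching.pairwiseDisjoint {M : Finset (Sym2 V)} (hM : IsMatching G M) :
    (M : Set (Sym2 V)).PairwiseDisjoint fun e => ({v | v ∈ e} : Finset V) := by
  intro e he f hf hef
  simp only [Function.onFun, disjoint_left, mem_filter, mem_univ, true_and]
  exact hM.2 e he f hf hef

theorem IsMatching.card_covered {M : Finset (Sym2 V)} (hM : IsMatching G M) :
    #(covered M) = 2 * #M := by
  rw [covered_eq_biUnion, card_biUnion hM.pairwiseDisjoint, mul_comm, ← smul_eq_mul,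
    ← sum_const]
  refine sum_congr rfl fun e he => ?_
  induction e using Sym2.ind with
  | _ x y => rw [filter_mem_mk, card_pair (G.ne_of_adj (hM.1 he))]

theorem IsMatching.two_mul_card_le {M : Finset (Sym2 V)} (hM : IsMatching G M) :
    2 * #M ≤ Fintype.card V :=
  hM.card_covered ▸ card_le_univ _

theorem IsMatching.card_compl_covered {M : Finset (Sym2 V)} (hM : IsMatching G M) :
    #(univ \ covered M) = Fintype.card V - 2 * #M := by
  rw [card_univ_sdiff, hM.card_covered]

theorem covered_empty : covered (∅ : Finset (Sym2 V)) = ∅ := by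
  ext; simp [covered]

theorem filter_matchings_card_eq_zero : {M ∈ matchings G | #M = 0} = {∅} := by
  ext M
  simp only [mem_filter, mem_singleton, card_eq_zero, and_iff_right_iff_imp]
  rintro rfl
  simp [mem_matchings, IsMatching]

theorem sum_matchings_card_eq_zero {M : Type*} [AddCommMonoid M] (f : Finset (Sym2 V) → M) :
    ∑ s ∈ matchings G with #s = 0, f s = f ∅ := by
  rw [filter_matchings_card_eq_zero, sum_singleton]

theorem sum_matchings_card_eq_one {M : Type*} [AddCommMonoid M] (f : Finset (Sym2 V) → M) :
    ∑ s ∈ matchings G with #s = 1, f s = ∑ e ∈ edges G, f {e} := by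
  rw [← sum_image fun _ _ _ _ h => singleton_injective h]
  refine sum_congr (ext fun s => ?_) fun _ _ => rfl
  simp only [mem_filter, mem_image, card_eq_one, mem_matchings]
  constructor
  · rintro ⟨hs, e, rfl⟩
    exact ⟨e, hs.mem_edges (mem_singleton_self e), rfl⟩
  · rintro ⟨e, he, rfl⟩
    refine ⟨⟨by simpa using mem_edges.1 he, ?_⟩, e, rfl⟩
    simp +contextual

end Matchings

section Coefficients

noncomputable def degreeMultiset (R : Type*) [CommRing R] (G : SimpleGraph V) (s : Finset V) :
    Multiset R :=
  s.val.map fun v => (deg G v : R)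

theorem card_degreeMultiset (s : Finset V) : Multiset.card (degreeMultiset R G s) = #s := by
  simp [degreeMultiset]

theorem cast_A (r : ℕ) : (A G r : R) = ∑ v, (deg G v : R) ^ r := by
  simp [A]

theorem sum_map_pow_degreeMultiset (r : ℕ) :
    ((degreeMultiset R G univ).map (· ^ r)).sum = A G r := by
  rw [cast_A, sum_eq_multiset_sum, degreeMultiset, Multiset.map_map]
  rfl

theorem LM_eq_sum_prod :
    LM R G = ∑ M ∈ matchings G, C ((-1) ^ #M) *
      ((degreeMultiset R G (univ \ covered M)).map fun a => X - C a).prod := by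
  simp [LM, degreeMultiset, Finset.prod, Multiset.map_map]

theorem coeff_LM {k : ℕ} (hk : k ≤ Fintype.card V) :
    (LM R G).coeff (Fintype.card V - k) = ∑ M ∈ matchings G with 2 * #M ≤ k,
      (-1) ^ (k - #M) * (degreeMultiset R G (univ \ covered M)).esymm (k - 2 * #M) := by
  rw [LM_eq_sum_prod, finsetSum_coeff, sum_filter]
  refine sum_congr rfl fun M hM => ?_
  have hM := mem_matchings.1 hM
  rw [coeff_C_mul, Multiset.coeff_prod_X_sub_C_sub _ (j := 2 * #M)
    (by rw [card_degreeMultiset, hM.card_compl_covered]; have := hM.two_mul_card_le; omega) hk]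
  split_ifs with h
  · rw [← mul_assoc, ← pow_add, show #M + (k - 2 * #M) = k - #M by omega]
  · rw [mul_zero]

theorem natDegree_LM_le : (LM R G).natDegree ≤ Fintype.card V := by
  nontriviality R
  rw [LM_eq_sum_prod]
  refine natDegree_sum_le_of_forall_le _ _ fun M _ => (natDegree_C_mul_le _ _).trans ?_
  rw [natDegree_multiset_prod_X_sub_C_eq_card, card_degreeMultiset]
  exact card_le_univ _

theorem coeff_LM_card : (LM R G).coeff (Fintype.card V) = 1 := by
  have h := coeff_LM (R := R) (G := G) (k := 0) (Nat.zero_le _)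
  simp only [Nat.le_zero, mul_eq_zero, OfNat.ofNat_ne_zero, false_or, Nat.sub_zero] at h
  rw [h, filter_matchings_card_eq_zero]
  simp [Multiset.esymm_zero]

theorem monic_LM : (LM R G).Monic :=
  monic_of_natDegree_le_of_coeff_eq_one _ natDegree_LM_le coeff_LM_card

theorem natDegree_LM [Nontrivial R] : (LM R G).natDegree = Fintype.card V :=
  natDegree_eq_of_le_of_coeff_ne_zero natDegree_LM_le (by simp [coeff_LM_card])

end Coefficients

section Roots

variable {F : Type*} [Field F] [IsAlgClosed F]

theorem card_roots_LM : Multiset.card (LM F G).roots = Fintype.card V := by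
  rw [← natDegree_LM (R := F)]
  exact splits_iff_card_roots.1 (IsAlgClosed.splits _)

theorem esymm_roots_LM (k : ℕ) :
    (LM F G).roots.esymm k = ∑ M ∈ matchings G with 2 * #M ≤ k,
      (-1) ^ #M * (degreeMultiset F G (univ \ covered M)).esymm (k - 2 * #M) := by
  rcases le_or_gt k (Fintype.card V) with hk | hk
  · have h := coeff_eq_esymm_roots_of_card (p := LM F G) (by rw [card_roots_LM, natDegree_LM])
      (k := Fintype.card V - k) (by rw [natDegree_LM]; omega)
    rw [natDegree_LM, monic_LM.leadingCoeff, Nat.sub_sub_self hk, coeff_LM hk, one_mul] at h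
    have hsq : (LM F G).roots.esymm k = (-1) ^ k * ((-1) ^ k * (LM F G).roots.esymm k) := by
      rw [← mul_assoc, ← pow_add, ← two_mul, pow_mul]
      simp
    rw [hsq, ← h, mul_sum]
    refine sum_congr rfl fun M hM => ?_
    have := (mem_filter.1 hM).2
    rw [← mul_assoc, ← pow_add, show k + (k - #M) = #M + 2 * (k - #M) by omega, pow_add,
      pow_mul]
    simp
  · rw [Multiset.esymm_eq_zero_of_card_lt (by rwa [card_roots_LM])]
    refine (sum_eq_zero fun M hM => ?_).symm
    obtain ⟨hM, hMk⟩ := mem_filter.1 hM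
    have hM := mem_matchings.1 hM
    rw [Multiset.esymm_eq_zero_of_card_lt, mul_zero]
    rw [card_degreeMultiset, hM.card_compl_covered]
    have := hM.two_mul_card_le
    omega

theorem esymm_roots_LM_eq_sum_range (k : ℕ) :
    (LM F G).roots.esymm k = ∑ j ∈ range (k / 2 + 1), (-1) ^ j *
      ∑ M ∈ matchings G with #M = j,
        (degreeMultiset F G (univ \ covered M)).esymm (k - 2 * j) := by
  rw [esymm_roots_LM, sum_filter_two_mul_card_le]
  refine sum_congr rfl fun j _ => ?_
  rw [mul_sum]
  exact sum_congr rfl fun M hM => by rw [(mem_filter.1 hM).2]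

end Roots

section EdgeSums

noncomputable def edgeDegSum (R : Type*) [CommRing R] (G : SimpleGraph V) : Sym2 V → R :=
  Sym2.lift ⟨fun x y => (deg G x : R) + deg G y, fun _ _ => add_comm _ _⟩

noncomputable def edgeDegProd (R : Type*) [CommRing R] (G : SimpleGraph V) : Sym2 V → R :=
  Sym2.lift ⟨fun x y => (deg G x : R) * deg G y, fun _ _ => mul_comm _ _⟩

theorem deg_eq_degree (v : V) : deg G v = G.degree v := by
  rw [← SimpleGraph.card_neighborFinset_eq_degree]
  unfold deg
  congr 1
  ext
  simp

theorem card_filter_mem_edges (x : V) : #{e ∈ edges G | x ∈ e} = deg G x := by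
  rw [deg_eq_degree, ← SimpleGraph.card_incidenceFinset_eq_degree]
  congr 1
  ext
  simp [edges, SimpleGraph.incidenceSet]

theorem sum_edges_lift_add (g : V → R) :
    ∑ e ∈ edges G, Sym2.lift ⟨fun x y => g x + g y, fun _ _ => add_comm _ _⟩ e =
      ∑ v, (deg G v : R) * g v := by
  rw [← sum_congr rfl fun e he => sum_filter_mem_edge g (mem_edges.1 he),
    sum_comm' (t' := univ) (s' := fun v => {e ∈ edges G | v ∈ e}) (by simp [and_comm])]
  simp [card_filter_mem_edges]

theorem sum_edges_lift_pow_add (r : ℕ) :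
    ∑ e ∈ edges G, Sym2.lift ⟨fun x y => (deg G x : R) ^ r + (deg G y : R) ^ r,
      fun _ _ => add_comm _ _⟩ e = A G (r + 1) := by
  rw [sum_edges_lift_add (fun v => (deg G v : R) ^ r), cast_A]
  exact sum_congr rfl fun v _ => (pow_succ' _ _).symm

theorem sum_edgeDegSum : ∑ e ∈ edges G, edgeDegSum R G e = A G 2 := by
  simpa [edgeDegSum] using sum_edges_lift_pow_add (R := R) (G := G) 1

theorem sum_edgeDegProd : ∑ e ∈ edges G, edgeDegProd R G e = B G := by
  rw [B, Nat.cast_sum]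
  refine sum_congr rfl fun e _ => ?_
  induction e using Sym2.ind with
  | _ x y => simp [edgeDegProd]

theorem sum_edgeDegSum_mul_edgeDegProd :
    ∑ e ∈ edges G, edgeDegSum R G e * edgeDegProd R G e = Csum G := by
  rw [Csum, Nat.cast_sum]
  refine sum_congr rfl fun e _ => ?_
  induction e using Sym2.ind with
  | _ x y =>
    simp only [edgeDegSum, edgeDegProd, Sym2.lift_mk]
    push_cast
    ring

theorem sum_edgeDegSum_sq_sub_edgeDegProd :
    ∑ e ∈ edges G, (edgeDegSum R G e ^ 2 - edgeDegProd R G e) = (A G 3 : R) + B G := by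
  rw [← sum_edges_lift_pow_add 2, ← sum_edgeDegProd, ← sum_add_distrib]
  refine sum_congr rfl fun e _ => ?_
  induction e using Sym2.ind with
  | _ x y =>
    simp only [edgeDegSum, edgeDegProd, Sym2.lift_mk]
    ring

theorem sum_edgeDegSum_pow_three_sub :
    ∑ e ∈ edges G, (edgeDegSum R G e ^ 3 - 2 * edgeDegSum R G e * edgeDegProd R G e) =
      (A G 4 : R) + Csum G := by
  rw [← sum_edges_lift_pow_add 3, ← sum_edgeDegSum_mul_edgeDegProd, ← sum_add_distrib]
  refine sum_congr rfl fun e _ => ?_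
  induction e using Sym2.ind with
  | _ x y =>
    simp only [edgeDegSum, edgeDegProd, Sym2.lift_mk]
    ring

end EdgeSums

section DeletedEdge

theorem degreeMultiset_univ_eq_cons_cons {x y : V} (h : x ≠ y) :
    degreeMultiset R G univ =
      (deg G x : R) ::ₘ (deg G y : R) ::ₘ degreeMultiset R G (univ \ {x, y}) := by
  have hu : (univ : Finset V) = cons x (cons y (univ \ {x, y}) (by simp)) (by simp [h]) := by
    ext z
    simp only [mem_univ, cons_eq_insert, mem_insert, mem_sdiff, mem_singleton, true_and, true_iff]
    tauto
  simp only [degreeMultiset]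
  rw [congrArg Finset.val hu, cons_val, cons_val, Multiset.map_cons, Multiset.map_cons]

variable {e : Sym2 V}

theorem esymm_one_compl_covered_singleton (he : e ∈ edges G) :
    (degreeMultiset R G (univ \ covered {e})).esymm 1 =
      (degreeMultiset R G univ).esymm 1 - edgeDegSum R G e := by
  induction e using Sym2.ind with
  | _ x y =>
    rw [covered_singleton_mk, degreeMultiset_univ_eq_cons_cons (G.ne_of_adj (mem_edges.1 he)),
      Multiset.esymm_one_eq_of_cons_cons (deg G x : R) (deg G y)]
    rfl

theorem esymm_two_compl_covered_singleton (he : e ∈ edges G) :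
    (degreeMultiset R G (univ \ covered {e})).esymm 2 =
      (degreeMultiset R G univ).esymm 2 - edgeDegSum R G e * (degreeMultiset R G univ).esymm 1
        + (edgeDegSum R G e ^ 2 - edgeDegProd R G e) := by
  induction e using Sym2.ind with
  | _ x y =>
    rw [covered_singleton_mk, degreeMultiset_univ_eq_cons_cons (G.ne_of_adj (mem_edges.1 he)),
      Multiset.esymm_two_eq_of_cons_cons (deg G x : R) (deg G y)]
    rfl

theorem esymm_three_compl_covered_singleton (he : e ∈ edges G) :
    (degreeMultiset R G (univ \ covered {e})).esymm 3 =
      (degreeMultiset R G univ).esymm 3 - edgeDegSum R G e * (degreeMultiset R G univ).esymm 2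
        + (edgeDegSum R G e ^ 2 - edgeDegProd R G e) * (degreeMultiset R G univ).esymm 1
        - (edgeDegSum R G e ^ 3 - 2 * edgeDegSum R G e * edgeDegProd R G e) := by
  induction e using Sym2.ind with
  | _ x y =>
    rw [covered_singleton_mk, degreeMultiset_univ_eq_cons_cons (G.ne_of_adj (mem_edges.1 he)),
      Multiset.esymm_three_eq_of_cons_cons (deg G x : R) (deg G y)]
    rfl

theorem sum_esymm_zero_compl_covered_singleton :
    ∑ e ∈ edges G, (degreeMultiset R G (univ \ covered {e})).esymm 0 = #(edges G) := by
  simp [Multiset.esymm_zero]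

theorem sum_esymm_one_compl_covered_singleton :
    ∑ e ∈ edges G, (degreeMultiset R G (univ \ covered {e})).esymm 1 =
      #(edges G) * (degreeMultiset R G univ).esymm 1 - A G 2 := by
  rw [sum_congr rfl fun e he => esymm_one_compl_covered_singleton he, sum_sub_distrib, sum_const,
    nsmul_eq_mul, sum_edgeDegSum]

theorem sum_esymm_two_compl_covered_singleton :
    ∑ e ∈ edges G, (degreeMultiset R G (univ \ covered {e})).esymm 2 =
      #(edges G) * (degreeMultiset R G univ).esymm 2 - A G 2 * (degreeMultiset R G univ).esymm 1
        + (A G 3 + B G) := by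
  rw [sum_congr rfl fun e he => esymm_two_compl_covered_singleton he, sum_add_distrib,
    sum_sub_distrib, sum_const, nsmul_eq_mul, ← sum_mul, sum_edgeDegSum,
    sum_edgeDegSum_sq_sub_edgeDegProd]

theorem sum_esymm_three_compl_covered_singleton :
    ∑ e ∈ edges G, (degreeMultiset R G (univ \ covered {e})).esymm 3 =
      #(edges G) * (degreeMultiset R G univ).esymm 3 - A G 2 * (degreeMultiset R G univ).esymm 2
        + (A G 3 + B G) * (degreeMultiset R G univ).esymm 1 - (A G 4 + Csum G) := by
  rw [sum_congr rfl fun e he => esymm_three_compl_covered_singleton he, sum_sub_distrib,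
    sum_add_distrib, sum_sub_distrib, sum_const, nsmul_eq_mul, ← sum_mul, ← sum_mul,
    sum_edgeDegSum, sum_edgeDegSum_sq_sub_edgeDegProd, sum_edgeDegSum_pow_three_sub]

end DeletedEdge

section TwoMatchings

theorem sum_covered {M : Finset (Sym2 V)} (hM : IsMatching G M) :
    ∑ v ∈ covered M, (deg G v : R) = ∑ e ∈ M, edgeDegSum R G e := by
  rw [covered_eq_biUnion, sum_biUnion hM.pairwiseDisjoint]
  exact sum_congr rfl fun e he => sum_filter_mem_edge _ (hM.1 he)

theorem esymm_one_compl_covered {M : Finset (Sym2 V)} (hM : IsMatching G M) :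
    (degreeMultiset R G (univ \ covered M)).esymm 1 =
      (degreeMultiset R G univ).esymm 1 - ∑ e ∈ M, edgeDegSum R G e := by
  simp only [Multiset.esymm_one, degreeMultiset, ← Finset.sum_eq_multiset_sum]
  rw [sum_sdiff_eq_sub (subset_univ _), sum_covered hM]

theorem card_matchings_card_two_mem {e : Sym2 V} (he : e ∈ edges G) :
    #{M ∈ matchings G | #M = 2 ∧ e ∈ M} = #{f ∈ edges G | ∀ z, z ∈ e → z ∉ f} := by
  have hne : ∀ f ∈ edges G, (∀ z, z ∈ e → z ∉ f) → e ≠ f := fun f _ hf hef =>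
    hf _ (Sym2.out_fst_mem e) (hef ▸ Sym2.out_fst_mem e)
  symm
  refine card_bij (fun f _ => {e, f}) (fun f hf => ?_) (fun f₁ hf₁ f₂ hf₂ h => ?_)
    fun M hM => ?_
  · obtain ⟨hfE, hdisj⟩ := mem_filter.1 hf
    refine mem_filter.2
      ⟨mem_matchings.2 ⟨?_, ?_⟩, card_pair (hne f hfE hdisj), mem_insert_self _ _⟩
    · simp [Set.insert_subset_iff, mem_edges.1 he, mem_edges.1 hfE]
    · simp only [mem_insert, mem_singleton]
      rintro a (rfl | rfl) b (rfl | rfl) hab z hz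
      · exact absurd rfl hab
      · exact hdisj z hz
      · exact fun hz' => hdisj z hz' hz
      · exact absurd rfl hab
  · have hf₁ := hne f₁ (mem_filter.1 hf₁).1 (mem_filter.1 hf₁).2
    have : f₁ ∈ ({e, f₂} : Finset (Sym2 V)) :=
      h ▸ mem_insert_of_mem (mem_singleton_self f₁)
    simpa [hf₁.symm] using this
  · obtain ⟨hM, hcard, heM⟩ := mem_filter.1 hM
    obtain ⟨f, hfM, hfe⟩ := exists_mem_ne (by omega : 1 < #M) e
    have hsub : ({e, f} : Finset (Sym2 V)) ⊆ M := insert_subset heM (singleton_subset_iff.2 hfM)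
    refine ⟨f, mem_filter.2 ⟨(mem_matchings.1 hM).mem_edges hfM,
      (mem_matchings.1 hM).2 e heM f hfM (Ne.symm hfe)⟩, ?_⟩
    exact eq_of_subset_of_card_le hsub (by rw [hcard, card_pair (Ne.symm hfe)])

theorem card_edges_disjoint_mk {x y : V} (hxy : G.Adj x y) :
    (#{f ∈ edges G | ∀ z, z ∈ s(x, y) → z ∉ f} : R) =
      #(edges G) + 1 - edgeDegSum R G s(x, y) := by
  have hmeet : {f ∈ edges G | ¬∀ z, z ∈ s(x, y) → z ∉ f} =
      {f ∈ edges G | x ∈ f} ∪ {f ∈ edges G | y ∈ f} := by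
    rw [← filter_or]
    exact filter_congr fun f _ => by
      simp only [Sym2.mem_iff, not_forall, not_not, exists_prop]
      constructor
      · rintro ⟨z, rfl | rfl, hz⟩
        exacts [Or.inl hz, Or.inr hz]
      · rintro (h | h)
        exacts [⟨x, Or.inl rfl, h⟩, ⟨y, Or.inr rfl, h⟩]
  have hboth : {f ∈ edges G | x ∈ f} ∩ {f ∈ edges G | y ∈ f} = {s(x, y)} := by
    rw [← filter_and]
    ext f
    simp only [mem_filter, mem_singleton, Sym2.mem_and_mem_iff (G.ne_of_adj hxy)]
    constructor
    · exact fun h => h.2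
    · rintro rfl
      exact ⟨mem_edges.2 hxy, rfl⟩
  have hsplit := card_filter_add_card_filter_not (s := edges G)
    (p := fun f => ∀ z, z ∈ s(x, y) → z ∉ f)
  have hincl := card_union_add_card_inter {f ∈ edges G | x ∈ f} {f ∈ edges G | y ∈ f}
  rw [← hmeet, hboth, card_singleton, card_filter_mem_edges, card_filter_mem_edges] at hincl
  have : #{f ∈ edges G | ∀ z, z ∈ s(x, y) → z ∉ f} + (deg G x + deg G y) =
      #(edges G) + 1 := by
    omega
  simp only [edgeDegSum, Sym2.lift_mk]
  linear_combination (norm := (push_cast; ring)) congrArg (Nat.cast : ℕ → R) this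

theorem sum_matchings_card_two_sum_edgeDegSum :
    ∑ M ∈ matchings G with #M = 2, ∑ e ∈ M, edgeDegSum R G e =
      ∑ e ∈ edges G, (#(edges G) + 1 - edgeDegSum R G e) * edgeDegSum R G e := by
  rw [sum_comm' (t' := edges G) (s' := fun e => {M ∈ matchings G | #M = 2 ∧ e ∈ M})
    fun M e => ?_]
  · refine sum_congr rfl fun e he => ?_
    rw [sum_const, card_matchings_card_two_mem he, nsmul_eq_mul]
    induction e using Sym2.ind with
    | _ x y => rw [card_edges_disjoint_mk (mem_edges.1 he)]
  · simp only [mem_filter]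
    constructor
    · rintro ⟨⟨hM, hcard⟩, heM⟩
      exact ⟨⟨hM, hcard, heM⟩, (mem_matchings.1 hM).mem_edges heM⟩
    · rintro ⟨⟨hM, hcard, heM⟩, -⟩
      exact ⟨⟨hM, hcard⟩, heM⟩

theorem sum_matchings_card_two_esymm_zero :
    ∑ M ∈ matchings G with #M = 2, (degreeMultiset R G (univ \ covered M)).esymm 0 =
      phi2 G := by
  simp [Multiset.esymm_zero, phi2]

theorem sum_matchings_card_two_esymm_one :
    ∑ M ∈ matchings G with #M = 2, (degreeMultiset R G (univ \ covered M)).esymm 1 =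
      phi2 G * (degreeMultiset R G univ).esymm 1
        - ((#(edges G) + 1) * A G 2 - (A G 3 + 2 * B G)) := by
  rw [sum_congr rfl fun M hM => esymm_one_compl_covered (mem_matchings.1 (mem_filter.1 hM).1),
    sum_sub_distrib, sum_const, nsmul_eq_mul, sum_matchings_card_two_sum_edgeDegSum, phi2]
  have hsq := sum_edgeDegSum_sq_sub_edgeDegProd (R := R) (G := G)
  rw [sum_sub_distrib, sum_edgeDegProd] at hsq
  simp only [sub_mul, add_mul, one_mul, sum_sub_distrib, sum_add_distrib, ← mul_sum, ← sq,
    sum_edgeDegSum]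
  linear_combination hsq

end TwoMatchings

end

/-- `p_5(G) = A_5 + 5 A_4 + 5 A_3 - 5 A_2 + 5 C + 10 B`. -/
theorem p5_identity [Fintype V] (G : SimpleGraph V) :
    psum G 5 = (A G 5 : ℂ) + 5 * (A G 4 : ℂ) + 5 * (A G 3 : ℂ) - 5 * (A G 2 : ℂ)
      + 5 * (Csum G : ℂ) + 10 * (B G : ℂ) := by
  rw [psum, Multiset.sum_map_pow_five, ← sum_map_pow_degreeMultiset 5,
    Multiset.sum_map_pow_five]
  simp only [esymm_roots_LM_eq_sum_range, Nat.reduceDiv, Nat.reduceAdd, sum_range_succ,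
    sum_range_zero, Nat.reduceMul, Nat.reduceSub, Nat.sub_zero, mul_zero,
    sum_matchings_card_eq_zero, sum_matchings_card_eq_one, covered_empty, sdiff_empty]
  rw [sum_esymm_zero_compl_covered_singleton, sum_esymm_one_compl_covered_singleton,
    sum_esymm_two_compl_covered_singleton, sum_esymm_three_compl_covered_singleton,
    sum_matchings_card_two_esymm_zero, sum_matchings_card_two_esymm_one]
  ring

end LMRIV
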